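/- arXiv:2504.08109 — 6 statements merged into one kernel-verified Lean document; each statement's English description precedes it below -/
import Mathlib

section
/- In a Nelson lattice, (a * b)² = (a ∧ b)² for all a, b. -/
/-!
The Nelson identity yields the rule: `a ≤ b` as soon as `a² ≤ b` and `(∼b)² ≤ ∼a`.
Applied to `b = ∼a` it shows `a³ = ⊥ → a² = ⊥`, and applied to `a = x²`, `b = x³`
(with `w = ∼(x³) * x`, whose cube vanishes) it gives 3-potency `x³ = x²`, hence `x⁴ = x²`.
Then `(a ∧ b)² ≤ a * b` gives `(a ∧ b)² = (a ∧ b)⁴ ≤ (a * b)²`, while `(a * b)² ≤ (a ∧ b)²`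
holds because multiplication is monotone and below both factors.
-/

/-- A Nelson (residuated) lattice: a bounded lattice with a commutative monoid
operation `mul` (unit `⊤`) residuated by `imp`, which is involutive
(`∼∼a = a` where `∼a = a ⇒ ⊥`) and satisfies the Nelson identity
`((a² ⇒ b) ⊓ ((∼b)² ⇒ ∼a)) ⇒ (a ⇒ b) = ⊤`. -/
structure NelsonStruct (A : Type*) [Lattice A] [BoundedOrder A] where
  mul : A → A → A
  imp : A → A → A
  mul_comm : ∀ a b, mul a b = mul b a
  mul_assoc : ∀ a b c, mul (mul a b) c = mul a (mul b c)
  top_mul : ∀ a, mul ⊤ a = a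
  res : ∀ a b c, mul a b ≤ c ↔ b ≤ imp a c
  involutive : ∀ a, imp (imp a ⊥) ⊥ = a
  nelson : ∀ a b,
    imp ((imp (mul a a) b) ⊓
         (imp (mul (imp b ⊥) (imp b ⊥)) (imp a ⊥))) (imp a b) = ⊤

namespace NelsonStruct

variable {A : Type*} [Lattice A] [BoundedOrder A] (N : NelsonStruct A)

/-- The square `a² = a * a`. -/
def sq (a : A) : A := N.mul a a

/-- The strong negation `∼a = a ⇒ ⊥`. -/
def sneg (a : A) : A := N.imp a ⊥

end NelsonStruct

namespace NelsonStruct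

variable {A : Type*} [Lattice A] [BoundedOrder A] (N : NelsonStruct A)

lemma mul_top (a : A) : N.mul a ⊤ = a := by
  rw [N.mul_comm, N.top_mul]

lemma mul_mul_mul_comm (a b c d : A) :
    N.mul (N.mul a b) (N.mul c d) = N.mul (N.mul a c) (N.mul b d) := by
  rw [N.mul_assoc, N.mul_assoc, ← N.mul_assoc b c d, N.mul_comm b c, N.mul_assoc c b d]

lemma mul_le_mul_left {b c : A} (h : b ≤ c) (a : A) : N.mul a b ≤ N.mul a c :=
  (N.res a b _).mpr (h.trans ((N.res a c _).mp le_rfl))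

lemma mul_le_mul {a b c d : A} (hab : a ≤ b) (hcd : c ≤ d) : N.mul a c ≤ N.mul b d := by
  calc N.mul a c = N.mul c a := N.mul_comm a c
    _ ≤ N.mul c b := N.mul_le_mul_left hab c
    _ = N.mul b c := N.mul_comm c b
    _ ≤ N.mul b d := N.mul_le_mul_left hcd b

lemma mul_le_left (a b : A) : N.mul a b ≤ a := by
  simpa only [N.mul_top] using N.mul_le_mul_left (le_top : b ≤ ⊤) a

lemma mul_le_right (a b : A) : N.mul a b ≤ b := by
  rw [N.mul_comm]
  exact N.mul_le_left b a

lemma imp_eq_top_iff {a b : A} : N.imp a b = ⊤ ↔ a ≤ b := by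
  rw [← top_le_iff, ← N.res, N.mul_top]

lemma imp_top (a : A) : N.imp ⊤ a = a := by
  refine le_antisymm ?_ ((N.res ⊤ a a).mp (N.top_mul a).le)
  simpa only [N.top_mul] using (N.res ⊤ (N.imp ⊤ a) a).mpr le_rfl

lemma le_sneg_iff {a b : A} : a ≤ N.sneg b ↔ N.mul a b ≤ ⊥ := by
  rw [sneg, ← N.res, N.mul_comm]

lemma sneg_sneg (a : A) : N.sneg (N.sneg a) = a :=
  N.involutive a

lemma sq_mono {a b : A} (h : a ≤ b) : N.sq a ≤ N.sq b :=
  N.mul_le_mul h h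

lemma le_of_sq_le {a b : A} (hab : N.sq a ≤ b) (hba : N.sq (N.sneg b) ≤ N.sneg a) : a ≤ b := by
  have h : N.imp (N.imp (N.sq a) b ⊓ N.imp (N.sq (N.sneg b)) (N.sneg a)) (N.imp a b) = ⊤ :=
    N.nelson a b
  rw [N.imp_eq_top_iff.mpr hab, N.imp_eq_top_iff.mpr hba, inf_idem, N.imp_top,
    N.imp_eq_top_iff] at h
  exact h

lemma sq_le_bot_of_mul_sq_le_bot {a : A} (h : N.mul (N.sq a) a ≤ ⊥) : N.sq a ≤ ⊥ := by
  have hsq : N.sq a ≤ N.sneg a := N.le_sneg_iff.mpr h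
  have ha : a ≤ N.sneg a := N.le_of_sq_le hsq (by rwa [N.sneg_sneg])
  exact N.le_sneg_iff.mp ha

lemma mul_sq_self (x : A) : N.mul (N.sq x) x = N.sq x := by
  set t := N.sneg (N.mul (N.sq x) x)
  have hxt : N.mul (N.sq (N.mul t x)) (N.mul t x) ≤ ⊥ :=
    calc N.mul (N.sq (N.mul t x)) (N.mul t x)
        ≤ N.mul (N.mul (N.mul t x) x) x :=
          N.mul_le_mul (N.mul_le_mul le_rfl (N.mul_le_right t x)) (N.mul_le_right t x)
      _ = N.mul t (N.mul (N.sq x) x) := by rw [sq, N.mul_assoc, N.mul_assoc, N.mul_assoc]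
      _ ≤ ⊥ := N.le_sneg_iff.mp le_rfl
  have hx4 : N.sq (N.sq x) ≤ N.mul (N.sq x) x := N.mul_le_mul le_rfl (N.mul_le_left x x)
  have ht : N.sq t ≤ N.sneg (N.sq x) := by
    rw [N.le_sneg_iff, sq, sq, ← N.mul_mul_mul_comm]
    exact N.sq_le_bot_of_mul_sq_le_bot hxt
  exact le_antisymm (N.mul_le_left _ _) (N.le_of_sq_le hx4 ht)

lemma sq_sq (x : A) : N.sq (N.sq x) = N.sq x := by
  conv_lhs => rw [sq, sq, ← N.mul_assoc, ← sq, N.mul_sq_self, N.mul_sq_self]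

end NelsonStruct

/-- In a Nelson lattice, `(a * b)² = (a ∧ b)²` for all `a, b`. -/
theorem NelsonStruct.sq_mul_eq_sq_inf {A : Type*} [Lattice A] [BoundedOrder A]
    (N : NelsonStruct A) (a b : A) :
    N.sq (N.mul a b) = N.sq (a ⊓ b) := by
  refine le_antisymm (N.sq_mono (le_inf (N.mul_le_left a b) (N.mul_le_right a b))) ?_
  calc N.sq (a ⊓ b) = N.sq (N.sq (a ⊓ b)) := (N.sq_sq _).symm
    _ ≤ N.sq (N.mul a b) := N.sq_mono (N.mul_le_mul inf_le_left inf_le_right)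
end

section
/- Let H be a Heyting algebra and F a Boolean filter of H. Then the set N(H,F) = {(x,y) ∈ H × H : x ∧ y = ⊥ and x ∨ y ∈ F}, with operations (x,y)∨(s,t)=(x∨s, y∧t), (x,y)∧(s,t)=(x∧s, y∨t), (x,y)*(s,t)=(x∧s, (x→t)∧(s→y)), (x,y)⇒(s,t)=((x→s)∧(t→y), x∧t), ⊤=(⊤,⊥), ⊥=(⊥,⊤), is a Nelson lattice. -/
section Twist

variable {H : Type*} [HeytingAlgebra H]

/-- The twist order: `(x,y) ≤ (s,t)` iff `x ≤ s` and `t ≤ y`. -/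
def tle (p q : H × H) : Prop := p.1 ≤ q.1 ∧ q.2 ≤ p.2

/-- Twist join: `(x,y) ∨ (s,t) = (x ∨ s, y ∧ t)`. -/
def tvee (p q : H × H) : H × H := (p.1 ⊔ q.1, p.2 ⊓ q.2)

/-- Twist meet: `(x,y) ∧ (s,t) = (x ∧ s, y ∨ t)`. -/
def twedge (p q : H × H) : H × H := (p.1 ⊓ q.1, p.2 ⊔ q.2)

/-- Twist fusion: `(x,y) * (s,t) = (x ∧ s, (x → t) ∧ (s → y))`. -/
def tmul (p q : H × H) : H × H := (p.1 ⊓ q.1, (p.1 ⇨ q.2) ⊓ (q.1 ⇨ p.2))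

/-- Twist implication: `(x,y) ⇒ (s,t) = ((x → s) ∧ (t → y), x ∧ t)`. -/
def timp (p q : H × H) : H × H := ((p.1 ⇨ q.1) ⊓ (q.2 ⇨ p.2), p.1 ⊓ q.2)

/-- Twist top `(⊤, ⊥)`. -/
def ttop : H × H := (⊤, ⊥)

/-- Twist bottom `(⊥, ⊤)`. -/
def tbot : H × H := (⊥, ⊤)

/-- The twist carrier `N(H,F) = {(x,y) : x ∧ y = ⊥, x ∨ y ∈ F}`. -/
def twistSet (F : Set H) : Set (H × H) :=
  {p : H × H | p.1 ⊓ p.2 = ⊥ ∧ p.1 ⊔ p.2 ∈ F}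

end Twist

/-! On pairs `(x, y)` with `x ⊓ y = ⊥` the involution `∼` is the swap `(x, y) ↦ (y, x)`, and
`p ⇒ q = ∼(p * ∼q)`, so everything about `⇒` reduces to `*`. The monoid and residuation laws
of `*` are Heyting arithmetic in each coordinate, and closure of `N(H,F)` under `*` and `∨`
holds because `(x ∨ y) ∧ (s ∨ t) ≤ (x ∧ s) ∨ (y ∨ t)` in a distributive lattice. The Nelson
identity holds since `(a² ⇒ b) ∧ (∼b² ⇒ ∼a)` is already equal to `a ⇒ b` on `N(H,F)`. -/

theorem sup_inf_sup_le_inf_sup_sup {α : Type*} [DistribLattice α] (a b c d : α) :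
    (a ⊔ b) ⊓ (c ⊔ d) ≤ a ⊓ c ⊔ (b ⊔ d) :=
  calc (a ⊔ b) ⊓ (c ⊔ d) ≤ (a ⊔ (b ⊔ d)) ⊓ (c ⊔ (b ⊔ d)) :=
        inf_le_inf (sup_le_sup_left le_sup_left _) (sup_le_sup_left le_sup_right _)
    _ = a ⊓ c ⊔ (b ⊔ d) := (sup_inf_right _ _ _).symm

theorem le_himp_of_inf_eq_bot {α : Type*} [HeytingAlgebra α] {a b : α} (h : a ⊓ b = ⊥)
    (c : α) : b ≤ a ⇨ c :=
  le_himp_iff'.mpr (h.trans_le bot_le)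

section Twist

variable {H : Type*} [HeytingAlgebra H]

theorem timp_eq_swap_tmul_swap (p q : H × H) : timp p q = (tmul p q.swap).swap := rfl

theorem twedge_eq_swap_tvee_swap (p q : H × H) : twedge p q = (tvee p.swap q.swap).swap := rfl

theorem timp_tbot {p : H × H} (hp : p.1 ⊓ p.2 = ⊥) : timp p tbot = p.swap := by
  refine Prod.ext ?_ (inf_top_eq p.1)
  simp only [timp, tbot, top_himp]
  exact inf_eq_right.mpr (le_himp_of_inf_eq_bot hp ⊥)

theorem timp_tbot_timp_tbot {p : H × H} (hp : p.1 ⊓ p.2 = ⊥) :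
    timp (timp p tbot) tbot = p := by
  rw [timp_tbot hp, timp_tbot (by rwa [inf_comm]), Prod.swap_swap]

theorem tmul_comm (p q : H × H) : tmul p q = tmul q p :=
  Prod.ext (inf_comm _ _) (inf_comm _ _)

theorem tmul_assoc (p q r : H × H) : tmul (tmul p q) r = tmul p (tmul q r) := by
  refine Prod.ext (inf_assoc _ _ _) ?_
  simp only [tmul, himp_inf_distrib, himp_himp]
  ac_rfl

theorem ttop_tmul {p : H × H} (hp : p.1 ⊓ p.2 = ⊥) : tmul ttop p = p := by
  refine Prod.ext (top_inf_eq p.1) ?_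
  simp only [tmul, ttop, top_himp]
  exact inf_eq_left.mpr (le_himp_of_inf_eq_bot hp ⊥)

theorem tle_tmul_iff (p q r : H × H) : tle (tmul p q) r ↔ tle q (timp p r) := by
  simp only [tle, tmul, timp, le_inf_iff, le_himp_iff]
  simp only [inf_comm]
  tauto

theorem timp_self {p : H × H} (hp : p.1 ⊓ p.2 = ⊥) : timp p p = ttop :=
  Prod.ext (by simp only [timp, ttop, himp_self, inf_top_eq]) hp

theorem twedge_timp_tmul_self_eq_timp (p q : H × H) :
    twedge (timp (tmul p p) q) (timp (tmul q.swap q.swap) p.swap) = timp p q := by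
  simp only [twedge, timp, tmul, Prod.fst_swap, Prod.snd_swap, inf_idem]
  refine Prod.ext ?_ (by simp only [inf_comm q.2, sup_idem])
  exact le_antisymm (inf_le_inf inf_le_left inf_le_left)
    (le_inf (le_inf inf_le_left (inf_le_right.trans (himp_le_himp_left le_himp)))
      (le_inf inf_le_right (inf_le_left.trans (himp_le_himp_left le_himp))))

section Order

variable {p q r : H × H}

theorem tle_tvee_left : tle p (tvee p q) := ⟨le_sup_left, inf_le_left⟩

theorem tle_tvee_right : tle q (tvee p q) := ⟨le_sup_right, inf_le_right⟩

theorem tvee_tle (hp : tle p r) (hq : tle q r) : tle (tvee p q) r :=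
  ⟨sup_le hp.1 hq.1, le_inf hp.2 hq.2⟩

theorem twedge_tle_left : tle (twedge p q) p := ⟨inf_le_left, le_sup_left⟩

theorem twedge_tle_right : tle (twedge p q) q := ⟨inf_le_right, le_sup_right⟩

theorem tle_twedge (hp : tle r p) (hq : tle r q) : tle r (twedge p q) :=
  ⟨le_inf hp.1 hq.1, sup_le hp.2 hq.2⟩

theorem tbot_tle : tle tbot p := ⟨bot_le, le_top⟩

theorem tle_ttop : tle p ttop := ⟨le_top, bot_le⟩

end Order

section Closure

variable {F : Set H} {p q : H × H}

theorem tvee_fst_inf_snd (hp : p.1 ⊓ p.2 = ⊥) (hq : q.1 ⊓ q.2 = ⊥) :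
    (tvee p q).1 ⊓ (tvee p q).2 = ⊥ := by
  simp only [tvee, ← disjoint_iff] at *
  exact Disjoint.sup_left (hp.mono_right inf_le_left) (hq.mono_right inf_le_right)

theorem tmul_fst_inf_snd (hq : q.1 ⊓ q.2 = ⊥) :
    (tmul p q).1 ⊓ (tmul p q).2 = ⊥ :=
  le_bot_iff.mp <| calc
    (tmul p q).1 ⊓ (tmul p q).2 ≤ q.1 ⊓ (p.1 ⊓ (p.1 ⇨ q.2)) :=
        le_inf (inf_le_left.trans inf_le_right) (inf_le_inf inf_le_left inf_le_left)
    _ ≤ q.1 ⊓ q.2 := inf_le_inf_left _ inf_himp_le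
    _ = ⊥ := hq

theorem sup_inf_sup_le_tvee :
    (p.1 ⊔ p.2) ⊓ (q.1 ⊔ q.2) ≤ (tvee p q).1 ⊔ (tvee p q).2 :=
  calc (p.1 ⊔ p.2) ⊓ (q.1 ⊔ q.2) = (p.2 ⊔ p.1) ⊓ (q.2 ⊔ q.1) := by
        rw [sup_comm p.1, sup_comm q.1]
    _ ≤ p.2 ⊓ q.2 ⊔ (p.1 ⊔ q.1) := sup_inf_sup_le_inf_sup_sup _ _ _ _
    _ = (tvee p q).1 ⊔ (tvee p q).2 := sup_comm _ _

theorem sup_inf_sup_le_tmul (hp : p.1 ⊓ p.2 = ⊥) (hq : q.1 ⊓ q.2 = ⊥) :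
    (p.1 ⊔ p.2) ⊓ (q.1 ⊔ q.2) ≤ (tmul p q).1 ⊔ (tmul p q).2 :=
  (sup_inf_sup_le_inf_sup_sup _ _ _ _).trans <| sup_le_sup_left
    (le_inf (sup_le (le_himp_of_inf_eq_bot hp _) le_himp)
      (sup_le le_himp (le_himp_of_inf_eq_bot hq _))) _

theorem swap_mem_twistSet (hp : p ∈ twistSet F) : p.swap ∈ twistSet F :=
  ⟨(inf_comm _ _).trans hp.1, sup_comm p.1 p.2 ▸ hp.2⟩

theorem mem_twistSet_of_sup_inf_sup_le (hF_up : ∀ a b : H, a ∈ F → a ≤ b → b ∈ F)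
    (hF_inf : ∀ a b : H, a ∈ F → b ∈ F → a ⊓ b ∈ F)
    (hp : p ∈ twistSet F) (hq : q ∈ twistSet F)
    {r : H × H} (hr : r.1 ⊓ r.2 = ⊥) (h : (p.1 ⊔ p.2) ⊓ (q.1 ⊔ q.2) ≤ r.1 ⊔ r.2) :
    r ∈ twistSet F :=
  ⟨hr, hF_up _ _ (hF_inf _ _ hp.2 hq.2) h⟩

theorem tvee_mem_twistSet (hF_up : ∀ a b : H, a ∈ F → a ≤ b → b ∈ F)
    (hF_inf : ∀ a b : H, a ∈ F → b ∈ F → a ⊓ b ∈ F)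
    (hp : p ∈ twistSet F) (hq : q ∈ twistSet F) :
    tvee p q ∈ twistSet F :=
  mem_twistSet_of_sup_inf_sup_le hF_up hF_inf hp hq (tvee_fst_inf_snd hp.1 hq.1)
    sup_inf_sup_le_tvee

theorem tmul_mem_twistSet (hF_up : ∀ a b : H, a ∈ F → a ≤ b → b ∈ F)
    (hF_inf : ∀ a b : H, a ∈ F → b ∈ F → a ⊓ b ∈ F)
    (hp : p ∈ twistSet F) (hq : q ∈ twistSet F) :
    tmul p q ∈ twistSet F :=
  mem_twistSet_of_sup_inf_sup_le hF_up hF_inf hp hq (tmul_fst_inf_snd hq.1)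
    (sup_inf_sup_le_tmul hp.1 hq.1)

theorem twedge_mem_twistSet (hF_up : ∀ a b : H, a ∈ F → a ≤ b → b ∈ F)
    (hF_inf : ∀ a b : H, a ∈ F → b ∈ F → a ⊓ b ∈ F)
    (hp : p ∈ twistSet F) (hq : q ∈ twistSet F) :
    twedge p q ∈ twistSet F :=
  twedge_eq_swap_tvee_swap p q ▸ swap_mem_twistSet
    (tvee_mem_twistSet hF_up hF_inf (swap_mem_twistSet hp) (swap_mem_twistSet hq))

theorem timp_mem_twistSet (hF_up : ∀ a b : H, a ∈ F → a ≤ b → b ∈ F)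
    (hF_inf : ∀ a b : H, a ∈ F → b ∈ F → a ⊓ b ∈ F)
    (hp : p ∈ twistSet F) (hq : q ∈ twistSet F) :
    timp p q ∈ twistSet F :=
  timp_eq_swap_tmul_swap p q ▸ swap_mem_twistSet
    (tmul_mem_twistSet hF_up hF_inf hp (swap_mem_twistSet hq))

theorem ttop_mem_twistSet (hF_top : ⊤ ∈ F) : ttop ∈ twistSet F :=
  ⟨inf_bot_eq ⊤, (sup_bot_eq (⊤ : H)).symm ▸ hF_top⟩

theorem tbot_mem_twistSet (hF_top : ⊤ ∈ F) : tbot ∈ twistSet F :=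
  swap_mem_twistSet (ttop_mem_twistSet hF_top)

end Closure

end Twist

theorem twist_is_nelson_lattice_general {H : Type*} [HeytingAlgebra H] (F : Set H)
    (hF_top : ⊤ ∈ F)
    (hF_up : ∀ a b : H, a ∈ F → a ≤ b → b ∈ F)
    (hF_inf : ∀ a b : H, a ∈ F → b ∈ F → a ⊓ b ∈ F) :
    -- closure under the operations and the constants
    (∀ p ∈ twistSet F, ∀ q ∈ twistSet F,
        tvee p q ∈ twistSet F ∧ twedge p q ∈ twistSet F ∧
        tmul p q ∈ twistSet F ∧ timp p q ∈ twistSet F) ∧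
    (ttop : H × H) ∈ twistSet F ∧ (tbot : H × H) ∈ twistSet F ∧
    -- lattice structure: `tvee` is the least upper bound for `tle`
    (∀ p ∈ twistSet F, ∀ q ∈ twistSet F,
        tle p (tvee p q) ∧ tle q (tvee p q) ∧
        ∀ r ∈ twistSet F, tle p r → tle q r → tle (tvee p q) r) ∧
    -- `twedge` is the greatest lower bound for `tle`
    (∀ p ∈ twistSet F, ∀ q ∈ twistSet F,
        tle (twedge p q) p ∧ tle (twedge p q) q ∧
        ∀ r ∈ twistSet F, tle r p → tle r q → tle r (twedge p q)) ∧
    -- bounds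
    (∀ p ∈ twistSet F, tle (tbot : H × H) p ∧ tle p (ttop : H × H)) ∧
    -- commutative monoid with unit `ttop`
    (∀ p q : H × H, tmul p q = tmul q p) ∧
    (∀ p q r : H × H, tmul (tmul p q) r = tmul p (tmul q r)) ∧
    (∀ p ∈ twistSet F, tmul ttop p = p) ∧
    -- residuation
    (∀ p ∈ twistSet F, ∀ q ∈ twistSet F, ∀ r ∈ twistSet F,
        (tle (tmul p q) r ↔ tle q (timp p r))) ∧
    -- involutivity: `∼∼p = p` where `∼p = p ⇒ ⊥`
    (∀ p ∈ twistSet F, timp (timp p tbot) tbot = p) ∧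
    -- the Nelson identity
    (∀ p ∈ twistSet F, ∀ q ∈ twistSet F,
        timp (twedge (timp (tmul p p) q)
              (timp (tmul (timp q tbot) (timp q tbot)) (timp p tbot)))
          (timp p q) = (ttop : H × H)) := by
  refine ⟨fun p hp q hq => ⟨tvee_mem_twistSet hF_up hF_inf hp hq,
      twedge_mem_twistSet hF_up hF_inf hp hq, tmul_mem_twistSet hF_up hF_inf hp hq,
      timp_mem_twistSet hF_up hF_inf hp hq⟩,
    ttop_mem_twistSet hF_top, tbot_mem_twistSet hF_top,
    fun _ _ _ _ => ⟨tle_tvee_left, tle_tvee_right, fun _ _ => tvee_tle⟩,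
    fun _ _ _ _ => ⟨twedge_tle_left, twedge_tle_right, fun _ _ => tle_twedge⟩,
    fun _ _ => ⟨tbot_tle, tle_ttop⟩, tmul_comm, tmul_assoc, fun _ hp => ttop_tmul hp.1,
    fun p _ q _ r _ => tle_tmul_iff p q r, fun _ hp => timp_tbot_timp_tbot hp.1, ?_⟩
  intro p hp q hq
  rw [timp_tbot hp.1, timp_tbot hq.1, twedge_timp_tmul_self_eq_timp]
  exact timp_self (timp_mem_twistSet hF_up hF_inf hp hq).1

/-- For a Heyting algebra `H` and a Boolean filter `F` of `H`
(a filter containing all dense elements), the twist structure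
`N(H,F) = {(x,y) : x ∧ y = ⊥, x ∨ y ∈ F}` with the twist operations is a
Nelson lattice: it is closed under the operations and contains `⊤, ⊥`;
`tvee`/`twedge` are the join/meet for the twist order, with bounds `ttop`,
`tbot`; `tmul` is a commutative monoid operation with unit `ttop`, residuated
by `timp`; the structure is involutive and satisfies the Nelson identity. -/
theorem twist_is_nelson_lattice {H : Type*} [HeytingAlgebra H] (F : Set H)
    (hF_top : ⊤ ∈ F)
    (hF_up : ∀ a b : H, a ∈ F → a ≤ b → b ∈ F)
    (hF_inf : ∀ a b : H, a ∈ F → b ∈ F → a ⊓ b ∈ F)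
    (hF_bool : ∀ a : H, aᶜ = ⊥ → a ∈ F) :
    -- closure under the operations and the constants
    (∀ p ∈ twistSet F, ∀ q ∈ twistSet F,
        tvee p q ∈ twistSet F ∧ twedge p q ∈ twistSet F ∧
        tmul p q ∈ twistSet F ∧ timp p q ∈ twistSet F) ∧
    (ttop : H × H) ∈ twistSet F ∧ (tbot : H × H) ∈ twistSet F ∧
    -- lattice structure: `tvee` is the least upper bound for `tle`
    (∀ p ∈ twistSet F, ∀ q ∈ twistSet F,
        tle p (tvee p q) ∧ tle q (tvee p q) ∧
        ∀ r ∈ twistSet F, tle p r → tle q r → tle (tvee p q) r) ∧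
    -- `twedge` is the greatest lower bound for `tle`
    (∀ p ∈ twistSet F, ∀ q ∈ twistSet F,
        tle (twedge p q) p ∧ tle (twedge p q) q ∧
        ∀ r ∈ twistSet F, tle r p → tle r q → tle r (twedge p q)) ∧
    -- bounds
    (∀ p ∈ twistSet F, tle (tbot : H × H) p ∧ tle p (ttop : H × H)) ∧
    -- commutative monoid with unit `ttop`
    (∀ p q : H × H, tmul p q = tmul q p) ∧
    (∀ p q r : H × H, tmul (tmul p q) r = tmul p (tmul q r)) ∧
    (∀ p ∈ twistSet F, tmul ttop p = p) ∧
    -- residuation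
    (∀ p ∈ twistSet F, ∀ q ∈ twistSet F, ∀ r ∈ twistSet F,
        (tle (tmul p q) r ↔ tle q (timp p r))) ∧
    -- involutivity: `∼∼p = p` where `∼p = p ⇒ ⊥`
    (∀ p ∈ twistSet F, timp (timp p tbot) tbot = p) ∧
    -- the Nelson identity
    (∀ p ∈ twistSet F, ∀ q ∈ twistSet F,
        timp (twedge (timp (tmul p p) q)
              (timp (tmul (timp q tbot) (timp q tbot)) (timp p tbot)))
          (timp p q) = (ttop : H × H)) :=
  twist_is_nelson_lattice_general F hF_top hF_up hF_inf
end

section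
/- Let H be a Heyting algebra and F1, F2 Boolean filters of H. Then N(H,F1) is a subalgebra of N(H,F2) (as subsets of H × H, closed under the twist operations) if and only if F1 ⊆ F2. -/
/-!
Both carriers are cut out of `H × H` by the same formulas, so a subalgebra is
just a subset. Membership of `(x, y)` in `N(H,F)` depends on `F` only through
`x ∨ y ∈ F`, which gives monotonicity in `F`; conversely `a ∈ F` is recovered
from `(a, ⊥) ∈ N(H,F)`.
-/

section Twist

variable {H : Type*} [HeytingAlgebra H]

theorem twistSet_mono {F G : Set H} (h : F ⊆ G) : twistSet F ⊆ twistSet G :=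
  fun _ hp => ⟨hp.1, h hp.2⟩

@[simp]
theorem mk_bot_mem_twistSet_iff {F : Set H} {a : H} : (a, ⊥) ∈ twistSet F ↔ a ∈ F := by
  simp [twistSet]

theorem twistSet_subset_twistSet_iff {F G : Set H} : twistSet F ⊆ twistSet G ↔ F ⊆ G :=
  ⟨fun h _ ha => mk_bot_mem_twistSet_iff.mp (h (mk_bot_mem_twistSet_iff.mpr ha)),
    twistSet_mono⟩

end Twist

theorem twist_subalgebra_iff_subset_general {H : Type*} [HeytingAlgebra H]
    (F1 F2 : Set H) :
    twistSet F1 ⊆ twistSet F2 ↔ F1 ⊆ F2 :=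
  twistSet_subset_twistSet_iff

/-- For Boolean filters `F1, F2` of a Heyting algebra `H`,
`N(H,F1)` is a subalgebra of `N(H,F2)` (since the operations are given by the
same formulas, this amounts to the inclusion of the carriers) iff `F1 ⊆ F2`. -/
theorem twist_subalgebra_iff_subset {H : Type*} [HeytingAlgebra H]
    (F1 F2 : Set H)
    (hF1_top : ⊤ ∈ F1)
    (hF1_up : ∀ a b : H, a ∈ F1 → a ≤ b → b ∈ F1)
    (hF1_inf : ∀ a b : H, a ∈ F1 → b ∈ F1 → a ⊓ b ∈ F1)
    (hF1_bool : ∀ a : H, aᶜ = ⊥ → a ∈ F1)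
    (hF2_top : ⊤ ∈ F2)
    (hF2_up : ∀ a b : H, a ∈ F2 → a ≤ b → b ∈ F2)
    (hF2_inf : ∀ a b : H, a ∈ F2 → b ∈ F2 → a ⊓ b ∈ F2)
    (hF2_bool : ∀ a : H, aᶜ = ⊥ → a ∈ F2) :
    twistSet F1 ⊆ twistSet F2 ↔ F1 ⊆ F2 :=
  twist_subalgebra_iff_subset_general F1 F2
end

section
/- Let M = ⟨H, □, ◇⟩ be a modal Heyting algebra (Heyting algebra with □a ∧ ◇(¬a ∧ b) = ⊥). Define on the full twist structure N(H) = {(x,y) : x ∧ y = ⊥} the operators ■(x,y) = (□x, ◇y) and ♦(x,y) = (◇x, □y). Then ■ and ♦ are well defined on N(H) (i.e., □x ∧ ◇y = ⊥ whenever x ∧ y = ⊥), and ⟨N(H), ■, ♦⟩ is a modal Nelson lattice: ♦p = ∼■∼p, p² = q² implies (■p)² = (■q)² and (♦p)² = (♦q)², and (p ∧ q)² = ⊥ implies (■p ∧ ♦q)² = ⊥. -/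
/-- The full twist carrier `N(H) = {(x,y) : x ∧ y = ⊥}`. -/
def fullTwistSet (H : Type*) [HeytingAlgebra H] : Set (H × H) :=
  {p : H × H | p.1 ⊓ p.2 = ⊥}

/-- The twist box `■(x,y) = (□x, ◇y)`. -/
def tbox {H : Type*} [HeytingAlgebra H] (box dia : H → H) (p : H × H) :
    H × H := (box p.1, dia p.2)

/-- The twist diamond `♦(x,y) = (◇x, □y)`. -/
def tdia {H : Type*} [HeytingAlgebra H] (box dia : H → H) (p : H × H) :
    H × H := (dia p.1, box p.2)

/-!
Disjointness `x ⊓ y = ⊥` means `y ≤ xᶜ`, so the modal axiom with `a = x`, `b = y` says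
exactly that `■` and `♦` preserve `N(H)`. On `N(H)` the square is `p² = (p.1, p.1ᶜ)` and
the negation `p ⇒ ⊥` is the swap `(p.2, p.1)`; hence squares only see the first coordinate,
and all three axioms reduce to the preservation of disjointness.
-/

section HeytingAlgebra

variable {H : Type*} [HeytingAlgebra H]

theorem himp_eq_compl_of_inf_eq_bot {a b : H} (h : a ⊓ b = ⊥) : a ⇨ b = aᶜ := by
  rw [← himp_bot, ← h, himp_inf_distrib, himp_self, top_inf_eq]

theorem box_inf_dia_eq_bot {box dia : H → H} (hmH : ∀ a b : H, box a ⊓ dia (aᶜ ⊓ b) = ⊥)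
    {x y : H} (h : x ⊓ y = ⊥) : box x ⊓ dia y = ⊥ := by
  have hy : xᶜ ⊓ y = y := inf_eq_right.2 (le_compl_iff_disjoint_left.2 (disjoint_iff.2 h))
  rw [← hy, hmH]

end HeytingAlgebra

section Twist

variable {H : Type*} [HeytingAlgebra H] {p q : H × H}

theorem mem_fullTwistSet_swap (hp : p ∈ fullTwistSet H) : p.swap ∈ fullTwistSet H :=
  (inf_comm p.2 p.1).trans hp

theorem tbox_mem_fullTwistSet {box dia : H → H}
    (hmH : ∀ a b : H, box a ⊓ dia (aᶜ ⊓ b) = ⊥) (hp : p ∈ fullTwistSet H) :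
    tbox box dia p ∈ fullTwistSet H :=
  box_inf_dia_eq_bot hmH hp

theorem tdia_mem_fullTwistSet {box dia : H → H}
    (hmH : ∀ a b : H, box a ⊓ dia (aᶜ ⊓ b) = ⊥) (hp : p ∈ fullTwistSet H) :
    tdia box dia p ∈ fullTwistSet H :=
  mem_fullTwistSet_swap (tbox_mem_fullTwistSet hmH (mem_fullTwistSet_swap hp))

theorem timp_tbot_of_mem (hp : p ∈ fullTwistSet H) : timp p tbot = p.swap := by
  have hle : p.2 ≤ p.1ᶜ := le_compl_iff_disjoint_left.2 (disjoint_iff.2 hp)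
  simp only [timp, tbot, himp_bot, top_himp, inf_top_eq, inf_eq_right.2 hle, Prod.swap]

theorem tdia_eq_timp_tbox_timp_tbot {box dia : H → H}
    (hmH : ∀ a b : H, box a ⊓ dia (aᶜ ⊓ b) = ⊥) (hp : p ∈ fullTwistSet H) :
    tdia box dia p = timp (tbox box dia (timp p tbot)) tbot := by
  rw [timp_tbot_of_mem hp,
    timp_tbot_of_mem (tbox_mem_fullTwistSet hmH (mem_fullTwistSet_swap hp))]
  rfl

theorem tmul_self_of_mem (hp : p ∈ fullTwistSet H) : tmul p p = (p.1, p.1ᶜ) := by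
  simp only [tmul, inf_idem, himp_eq_compl_of_inf_eq_bot hp]

theorem tmul_self_eq_tmul_self_iff (hp : p ∈ fullTwistSet H) (hq : q ∈ fullTwistSet H) :
    tmul p p = tmul q q ↔ p.1 = q.1 := by
  rw [tmul_self_of_mem hp, tmul_self_of_mem hq, Prod.mk.injEq]
  exact ⟨And.left, fun h => ⟨h, congrArg compl h⟩⟩

theorem tmul_self_eq_tbot_iff : tmul p p = tbot ↔ p.1 = ⊥ := by
  simp only [tmul, tbot, inf_idem, Prod.mk.injEq, and_iff_left_iff_imp]
  intro h
  rw [h, bot_himp]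

end Twist

/-- Let `⟨H, □, ◇⟩` be a modal Heyting algebra (i.e.
`□a ⊓ ◇(aᶜ ⊓ b) = ⊥`). On the full twist structure `N(H)` define
`■(x,y) = (□x, ◇y)` and `♦(x,y) = (◇x, □y)`. Then `■` and `♦` are well
defined on `N(H)`, and `⟨N(H), ■, ♦⟩` is a modal Nelson lattice:
`♦p = ∼■∼p`, `p² = q²` implies `(■p)² = (■q)²` and `(♦p)² = (♦q)²`, and
`(p ∧ q)² = ⊥` implies `(■p ∧ ♦q)² = ⊥`. -/
theorem twist_modal_nelson {H : Type*} [HeytingAlgebra H]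
    (box dia : H → H)
    (hmH : ∀ a b : H, box a ⊓ dia (aᶜ ⊓ b) = ⊥) :
    -- well-definedness
    (∀ p ∈ fullTwistSet H, tbox box dia p ∈ fullTwistSet H ∧
        tdia box dia p ∈ fullTwistSet H) ∧
    -- (mN1): ♦p = ∼■∼p
    (∀ p ∈ fullTwistSet H,
        tdia box dia p = timp (tbox box dia (timp p tbot)) tbot) ∧
    -- (mN2): p² = q² implies (■p)² = (■q)² and (♦p)² = (♦q)²
    (∀ p ∈ fullTwistSet H, ∀ q ∈ fullTwistSet H, tmul p p = tmul q q →
        tmul (tbox box dia p) (tbox box dia p) =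
          tmul (tbox box dia q) (tbox box dia q) ∧
        tmul (tdia box dia p) (tdia box dia p) =
          tmul (tdia box dia q) (tdia box dia q)) ∧
    -- (mN3'): (p ∧ q)² = ⊥ implies (■p ∧ ♦q)² = ⊥
    (∀ p ∈ fullTwistSet H, ∀ q ∈ fullTwistSet H,
        tmul (twedge p q) (twedge p q) = tbot →
        tmul (twedge (tbox box dia p) (tdia box dia q))
             (twedge (tbox box dia p) (tdia box dia q)) = tbot) := by
  refine ⟨fun p hp => ⟨tbox_mem_fullTwistSet hmH hp, tdia_mem_fullTwistSet hmH hp⟩,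
    fun p hp => tdia_eq_timp_tbox_timp_tbot hmH hp, fun p hp q hq hpq => ?_,
    fun p _ q _ hpq => ?_⟩
  · have hfst : p.1 = q.1 := (tmul_self_eq_tmul_self_iff hp hq).1 hpq
    exact ⟨(tmul_self_eq_tmul_self_iff (tbox_mem_fullTwistSet hmH hp)
        (tbox_mem_fullTwistSet hmH hq)).2 (congrArg box hfst),
      (tmul_self_eq_tmul_self_iff (tdia_mem_fullTwistSet hmH hp)
        (tdia_mem_fullTwistSet hmH hq)).2 (congrArg dia hfst)⟩
  · rw [tmul_self_eq_tbot_iff] at hpq ⊢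
    exact box_inf_dia_eq_bot hmH hpq
end

section
/- Let H be a Heyting algebra and x, y ∈ H. The following are equivalent: (1) x ∧ y = ⊥ and x ∨ y is dense; (2) x ∧ y = ⊥ and ¬x ∧ ¬y = ⊥; (3) ¬x = ¬¬y; (4) ¬x → x = ¬y. -/
/-!
Both `x ⊓ y = ⊥` and `xᶜ ⊓ yᶜ = ⊥` are inequalities between the regular elements `xᶜ` and `yᶜᶜ`:
the first says `yᶜᶜ ≤ xᶜ`, the second `xᶜ ≤ yᶜᶜ`. Condition (4) reduces to (3) because
`xᶜ ⇨ x = xᶜ ⇨ (x ⊓ xᶜ) = xᶜᶜ`, and `xᶜᶜ = yᶜ` is equivalent to `xᶜ = yᶜᶜ` by `aᶜᶜᶜ = aᶜ`.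
-/

section

variable {H : Type*} [HeytingAlgebra H] {a b : H}

theorem compl_himp_self (a : H) : aᶜ ⇨ a = aᶜᶜ := by
  calc aᶜ ⇨ a = (aᶜ ⇨ a) ⊓ (aᶜ ⇨ aᶜ) := by rw [himp_self, inf_top_eq]
    _ = aᶜ ⇨ a ⊓ aᶜ := (himp_inf_distrib _ _ _).symm
    _ = aᶜᶜ := by rw [inf_compl_self, himp_bot]

theorem inf_eq_bot_iff_compl_compl_le_compl : a ⊓ b = ⊥ ↔ bᶜᶜ ≤ aᶜ := by
  rw [← disjoint_iff, ← disjoint_compl_compl_right_iff, le_compl_iff_disjoint_left]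

theorem compl_inf_compl_eq_bot_iff : aᶜ ⊓ bᶜ = ⊥ ↔ aᶜ ≤ bᶜᶜ := by
  rw [← disjoint_iff, le_compl_iff_disjoint_right]

theorem compl_compl_eq_compl_iff : aᶜᶜ = bᶜ ↔ aᶜ = bᶜᶜ where
  mp h := by rw [← compl_compl_compl a, h]
  mpr h := by rw [h, compl_compl_compl]

end

/-- In a Heyting algebra `H`, for `x, y ∈ H` the following are
equivalent: (1) `x ⊓ y = ⊥` and `x ⊔ y` is dense; (2) `x ⊓ y = ⊥` and
`xᶜ ⊓ yᶜ = ⊥`; (3) `xᶜ = yᶜᶜ`; (4) `xᶜ ⇨ x = yᶜ`. -/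
theorem heyting_dense_equivalences {H : Type*} [HeytingAlgebra H] (x y : H) :
    List.TFAE
      [x ⊓ y = ⊥ ∧ (x ⊔ y)ᶜ = ⊥,
       x ⊓ y = ⊥ ∧ xᶜ ⊓ yᶜ = ⊥,
       xᶜ = yᶜᶜ,
       xᶜ ⇨ x = yᶜ] := by
  tfae_have 1 ↔ 2 := by rw [compl_sup]
  tfae_have 2 ↔ 3 := by
    rw [inf_eq_bot_iff_compl_compl_le_compl, compl_inf_compl_eq_bot_iff, and_comm,
      ← le_antisymm_iff]
  tfae_have 3 ↔ 4 := by rw [compl_himp_self, compl_compl_eq_compl_iff]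
  tfae_finish
end

section
/- Let M = ⟨H, □, ◇⟩ be a modal Heyting algebra satisfying ¬¬□a = ¬◇¬a and ¬□¬a = ¬¬◇a for all a. If x ∧ y = ⊥ and x ∨ y is dense in H, then □x ∨ ◇y is dense in H. -/
/-!
Disjointness of `x` and `y` together with density of `x ⊔ y` amounts to `xᶜᶜ = yᶜ`. Feeding the disjoint pair
`xᶜᶜ, xᶜ` to the modal quasi-equation and translating with the two double-negation laws
gives `(□x)ᶜ ≤ (◇y)ᶜᶜ`, which is density of `□x ⊔ ◇y`.
-/

section HeytingAlgebra

variable {H : Type*} [HeytingAlgebra H]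

theorem compl_compl_eq_compl_of_inf_eq_bot_of_compl_sup_eq_bot {x y : H}
    (hxy : x ⊓ y = ⊥) (hdense : (x ⊔ y)ᶜ = ⊥) : xᶜᶜ = yᶜ := by
  rw [compl_sup] at hdense
  refine le_antisymm (compl_le_compl ?_) ?_
  · exact le_compl_iff_disjoint_left.2 (disjoint_iff.2 hxy)
  · exact le_compl_iff_disjoint_left.2 (disjoint_iff.2 hdense)

theorem compl_sup_eq_bot_of_compl_le_compl_compl {a b : H} (h : aᶜ ≤ bᶜᶜ) :
    (a ⊔ b)ᶜ = ⊥ :=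
  le_bot_iff.1 <| calc
    (a ⊔ b)ᶜ = aᶜ ⊓ bᶜ := compl_sup
    _ ≤ bᶜᶜ ⊓ bᶜ := inf_le_inf_right _ h
    _ = ⊥ := compl_inf_self _

end HeytingAlgebra

section Modal

variable {H : Type*} [HeytingAlgebra H] {box dia : H → H}

theorem box_compl_compl_le_compl_compl_box
    (hmH : ∀ a b : H, a ⊓ b = ⊥ → box a ⊓ dia b = ⊥)
    (h1 : ∀ a : H, (box a)ᶜᶜ = (dia aᶜ)ᶜ) (a : H) :
    box aᶜᶜ ≤ (box a)ᶜᶜ := by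
  rw [h1]
  exact le_compl_iff_disjoint_right.2 (disjoint_iff.2 (hmH _ _ (compl_inf_self _)))

end Modal

/-- Let `⟨H, □, ◇⟩` be a modal Heyting algebra (satisfying
`a ⊓ b = ⊥ → □a ⊓ ◇b = ⊥`) with `(□a)ᶜᶜ = (◇aᶜ)ᶜ` and `(□aᶜ)ᶜ = (◇a)ᶜᶜ`
for all `a`. If `x ⊓ y = ⊥` and `x ⊔ y` is dense, then `□x ⊔ ◇y` is dense. -/
theorem modal_dense_preserved {H : Type*} [HeytingAlgebra H]
    (box dia : H → H)
    (hmH : ∀ a b : H, a ⊓ b = ⊥ → box a ⊓ dia b = ⊥)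
    (h1 : ∀ a : H, (box a)ᶜᶜ = (dia aᶜ)ᶜ)
    (h2 : ∀ a : H, (box aᶜ)ᶜ = (dia a)ᶜᶜ)
    (x y : H) (hxy : x ⊓ y = ⊥) (hdense : (x ⊔ y)ᶜ = ⊥) :
    (box x ⊔ dia y)ᶜ = ⊥ := by
  have hx : xᶜᶜ = yᶜ := compl_compl_eq_compl_of_inf_eq_bot_of_compl_sup_eq_bot hxy hdense
  apply compl_sup_eq_bot_of_compl_le_compl_compl
  calc (box x)ᶜ = (box x)ᶜᶜᶜ := (compl_compl_compl _).symm
    _ ≤ (box xᶜᶜ)ᶜ := compl_le_compl (box_compl_compl_le_compl_compl_box hmH h1 x)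
    _ = (dia y)ᶜᶜ := by rw [hx, h2]
end
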